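/- For all i, j ∈ {1,…,4}, the electromagnetic d-tensor produced by the (t,x)-conformal deformed quartic Berwald-Moór Hamiltonian vanishes identically: F_{(1)j}^{(i)} := (h¹¹(t)/2) [ Σ_{r=1}^{4} g^{jr} N_{(r)i}^{(1)} − Σ_{r=1}^{4} g^{ir} N_{(r)j}^{(1)} + Σ_{r,m=1}^{4} ( g^{jr} H^m_{ri} − g^{ir} H^m_{rj} ) p_m ] = 0. -/
import Mathlib


/-- Partial derivative of `f : (Fin 4 → ℝ) → ℝ` with respect to the `i`-th coordinate. -/
noncomputable def pd (f : (Fin 4 → ℝ) → ℝ) (i : Fin 4) (v : Fin 4 → ℝ) : ℝ :=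
  deriv (fun s => f (Function.update v i s)) (v i)

/-- Kronecker delta. -/
noncomputable def kron (i j : Fin 4) : ℝ := if i = j then 1 else 0

/-- The contravariant metrical d-tensor `g^{ij} = (e^{-2σ(x)}(1-2δ^{ij})/2) 𝒫^{1/2}/(p_i p_j)`. -/
noncomputable def gup (σ : (Fin 4 → ℝ) → ℝ) (x p : Fin 4 → ℝ) (i j : Fin 4) : ℝ :=
  Real.exp (-2 * σ x) * (1 - 2 * kron i j) / 2 * Real.sqrt (∏ m, p m) / (p i * p j)

/-- The spatial nonlinear connection `N_{(r)m}^{(1)} = −4 σ_r(x) p_r δ_{rm}`. -/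
noncomputable def Nc (σ : (Fin 4 → ℝ) → ℝ) (x p : Fin 4 → ℝ) (r m : Fin 4) : ℝ :=
  -4 * pd σ r x * p r * kron r m

/-- The Cartan coefficient `H^m_{ri} = 4 δ^m_r δ^m_i σ_m(x)`. -/
noncomputable def Hh (σ : (Fin 4 → ℝ) → ℝ) (x : Fin 4 → ℝ) (m r i : Fin 4) : ℝ :=
  4 * kron m r * kron m i * pd σ m x

lemma key (σ : (Fin 4 → ℝ) → ℝ) (x p : Fin 4 → ℝ) (r i : Fin 4) :
    Nc σ x p r i + ∑ m, Hh σ x m r i * p m = 0 := by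
  have hs : ∑ m, Hh σ x m r i * p m = 4 * kron r i * pd σ r x * p r := by
    rw [Finset.sum_eq_single r]
    · simp only [Hh, kron, if_pos rfl, if_true]; ring
    · intro m _ hmr
      simp [Hh, kron, hmr]
    · simp
  rw [hs, Nc]; ring

/-- the electromagnetic d-tensor
`F_{(1)j}^{(i)} = (h¹¹/2)[Σ_r g^{jr} N_{(r)i}^{(1)} − Σ_r g^{ir} N_{(r)j}^{(1)}
+ Σ_{r,m}(g^{jr} H^m_{ri} − g^{ir} H^m_{rj}) p_m]` vanishes identically. -/
theorem stmt_14 (σ : (Fin 4 → ℝ) → ℝ) (hσ : ContDiff ℝ (⊤ : ℕ∞) σ)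
    (h : ℝ → ℝ) (hh : ContDiff ℝ (⊤ : ℕ∞) h) (hhpos : ∀ t, 0 < h t)
    (t : ℝ) (x p : Fin 4 → ℝ) (hp : ∀ i, 0 < p i) (i j : Fin 4) :
    ((h t)⁻¹ / 2) *
      ((∑ r, gup σ x p j r * Nc σ x p r i) - (∑ r, gup σ x p i r * Nc σ x p r j)
        + ∑ r, ∑ m, (gup σ x p j r * Hh σ x m r i - gup σ x p i r * Hh σ x m r j) * p m)
    = 0 := by
  have h1 : ∀ (a b : Fin 4), (∑ r, gup σ x p a r * Nc σ x p r b)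
      + ∑ r, ∑ m, gup σ x p a r * Hh σ x m r b * p m = 0 := by
    intro a b
    rw [← Finset.sum_add_distrib]
    refine Finset.sum_eq_zero fun r _ => ?_
    have hm : ∑ m, gup σ x p a r * Hh σ x m r b * p m
        = gup σ x p a r * ∑ m, Hh σ x m r b * p m := by
      rw [Finset.mul_sum]; exact Finset.sum_congr rfl fun m _ => by ring
    rw [hm, ← mul_add, key, mul_zero]
  have e : (∑ r, gup σ x p j r * Nc σ x p r i) - (∑ r, gup σ x p i r * Nc σ x p r j)
        + ∑ r, ∑ m, (gup σ x p j r * Hh σ x m r i - gup σ x p i r * Hh σ x m r j) * p m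
      = ((∑ r, gup σ x p j r * Nc σ x p r i)
          + ∑ r, ∑ m, gup σ x p j r * Hh σ x m r i * p m)
        - ((∑ r, gup σ x p i r * Nc σ x p r j)
          + ∑ r, ∑ m, gup σ x p i r * Hh σ x m r j * p m) := by
    simp only [sub_mul, Finset.sum_sub_distrib]
    ring
  rw [e, h1, h1, sub_zero, mul_zero]
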